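/- arXiv:2512.21261 — 2 statements merged into one kernel-verified Lean document; each statement's English description precedes it below -/
import Mathlib

section
/- (Tensorization of the divergence over the initial condition.) Let ℓ satisfy Assumption (L). Let Q and ℙ be Borel probability measures on Ω with the same initial law: Q∘X_0^{-1} = ℙ∘X_0^{-1} = μ_0. Then I_ℓ(Q|ℙ) = ∫_{ℝ^m} I_ℓ(Q_x|ℙ_x) μ_0(dx), where (Q_x) and (ℙ_x) are the regular conditional distributions of Q and ℙ given X_0. -/
open MeasureTheory ProbabilityTheory Filter Classical
open scoped ENNReal NNReal

noncomputable section

abbrev Euc (m : ℕ) := EuclideanSpace ℝ (Fin m)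

abbrev PathSpace (T : ℝ) (m : ℕ) := C(Set.Icc (0:ℝ) T, Euc m)

instance (T : ℝ) (m : ℕ) : MeasurableSpace (PathSpace T m) := borel _

/-- Evaluation at time `0`. -/
def evalStart {T : ℝ} (hT : 0 ≤ T) {m : ℕ} (ω : PathSpace T m) : Euc m :=
  ω ⟨0, Set.mem_Icc.mpr ⟨le_refl 0, hT⟩⟩

/-- Evaluation at time `T`. -/
def evalEnd {T : ℝ} (hT : 0 ≤ T) {m : ℕ} (ω : PathSpace T m) : Euc m :=
  ω ⟨T, Set.mem_Icc.mpr ⟨hT, le_refl T⟩⟩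

/-- The divergence `I_ℓ(Q|P)`. -/
def Idiv {α : Type*} [MeasurableSpace α] (ℓ : ℝ → ℝ) (Q P : Measure α) : ℝ≥0∞ :=
  if Q ≪ P then ∫⁻ x, ENNReal.ofReal (ℓ ((Q.rnDeriv P x).toReal)) ∂P else ⊤

/-- Assumption (L). -/
structure AssumptionL (ℓ : ℝ → ℝ) : Prop where
  nonneg : ∀ x, 0 ≤ ℓ x
  strict_convex : StrictConvexOn ℝ (Set.Ici (0:ℝ)) ℓ
  smooth : ContDiffOn ℝ 2 ℓ (Set.Ioi (0:ℝ))
  at_one : ℓ 1 = 0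
  superlinear : Tendsto (fun x => ℓ x / x) atTop atTop

/-- Couplings of two measures on `ℝ^m`. -/
def Coupling {m : ℕ} (μ ν : Measure (Euc m)) : Type _ :=
  {π : Measure (Euc m × Euc m) // IsProbabilityMeasure π ∧
    π.map Prod.fst = μ ∧ π.map Prod.snd = ν}

/-- The weak optimal transport value `𝒲_c(μ,ν)`. -/
def Wc {m : ℕ} (c : Euc m → Measure (Euc m) → ℝ) (μ ν : Measure (Euc m)) : ℝ≥0∞ :=
  ⨅ π : Coupling μ ν,
    haveI : IsProbabilityMeasure π.1 := π.2.1
    ∫⁻ x, ENNReal.ofReal (c x (π.1.condKernel x)) ∂μ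

/-- The `p`-Wasserstein distance. -/
def Wp {m : ℕ} (p : ℝ) (μ ν : Measure (Euc m)) : ℝ≥0∞ :=
  (⨅ π : Coupling μ ν, ∫⁻ z, (‖z.1 - z.2‖₊ : ℝ≥0∞) ^ p ∂π.1) ^ (1/p)

/-- Membership in `𝒫_p(ℝ^m)`: probability with finite `p`-th moment. -/
def memPp {m : ℕ} (p : ℝ) (μ : Measure (Euc m)) : Prop :=
  IsProbabilityMeasure μ ∧ ∫⁻ y, (‖y‖₊ : ℝ≥0∞) ^ p ∂μ < ⊤

/-- Assumption (C). -/
structure AssumptionC {m : ℕ} (p : ℝ) (c : Euc m → Measure (Euc m) → ℝ) : Prop where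
  nonneg : ∀ x ρ, 0 ≤ c x ρ
  lsc : ∀ (x : Euc m) (ρ : Measure (Euc m)) (xs : ℕ → Euc m) (ρs : ℕ → Measure (Euc m)),
    memPp p ρ → (∀ n, memPp p (ρs n)) →
    Tendsto xs atTop (nhds x) →
    Tendsto (fun n => Wp p (ρs n) ρ) atTop (nhds 0) →
    c x ρ ≤ liminf (fun n => c (xs n) (ρs n)) atTop
  growth : ∃ L : ℝ, 0 < L ∧ ∀ x ρ, memPp p ρ →
    ENNReal.ofReal (c x ρ) ≤
      ENNReal.ofReal L * (1 + ENNReal.ofReal (‖x‖ ^ p) + ∫⁻ y, (‖y‖₊ : ℝ≥0∞) ^ p ∂ρ)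
  convex : ∀ x (ρ₁ ρ₂ : Measure (Euc m)), memPp p ρ₁ → memPp p ρ₂ →
    ∀ lam : ℝ, 0 ≤ lam → lam ≤ 1 →
    c x (ENNReal.ofReal lam • ρ₁ + ENNReal.ofReal (1 - lam) • ρ₂) ≤
      lam * c x ρ₁ + (1 - lam) * c x ρ₂

/-- The admissible set `𝒫_c(μ₀, μ_T)`. -/
def PcSet {T : ℝ} (hT : 0 ≤ T) {m : ℕ} (c : Euc m → Measure (Euc m) → ℝ)
    (μ0 μT : Measure (Euc m)) : Set (Measure (PathSpace T m)) :=
  {Q | IsProbabilityMeasure Q ∧ Q.map (evalStart hT) = μ0 ∧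
    Wc c (Q.map (evalEnd hT)) μT = 0}

/-- The cost `∫ C dQ + I_ℓ(Q|ℙ)`, as an extended real number; `K` is a lower bound of `C`,
so that `∫ C dQ = ∫⁻ (C - K) dQ + K` as extended reals. -/
def cost {T : ℝ} {m : ℕ} (ℓ : ℝ → ℝ) (C : PathSpace T m → ℝ) (K : ℝ)
    (P Q : Measure (PathSpace T m)) : EReal :=
  ((∫⁻ ω, ENNReal.ofReal (C ω - K) ∂Q : ℝ≥0∞) : EReal) + (K : EReal) +
    ((Idiv ℓ Q P : ℝ≥0∞) : EReal)

/-- The value `V_c(μ₀, μ_T)`. -/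
def Vc {T : ℝ} (hT : 0 ≤ T) {m : ℕ} (ℓ : ℝ → ℝ) (c : Euc m → Measure (Euc m) → ℝ)
    (C : PathSpace T m → ℝ) (K : ℝ) (P : Measure (PathSpace T m))
    (μ0 μT : Measure (Euc m)) : EReal :=
  ⨅ Q ∈ PcSet hT c μ0 μT, cost ℓ C K P Q

/-- The convex conjugate `ℓ*(y) = sup_{x ∈ ℝ} (x y - ℓ(x))`. -/
def conj (ℓ : ℝ → ℝ) (y : ℝ) : ℝ := ⨆ x : ℝ, (x * y - ℓ x)

/-- The optimized certainty equivalent `Φ_P(ξ) = inf_r (∫ ℓ*(ξ - r) dP + r)`. -/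
def OCE {α : Type*} [MeasurableSpace α] (ℓ : ℝ → ℝ) (P : Measure α) (ξ : α → ℝ) : ℝ :=
  ⨅ r : ℝ, (∫ x, conj ℓ (ξ x - r) ∂P + r)

/-- `K` is a regular conditional distribution of `R` given `X`. -/
def IsRCD {Ω β : Type*} [MeasurableSpace Ω] [MeasurableSpace β]
    (R : Measure Ω) (X : Ω → β) (K : β → Measure Ω) : Prop :=
  (∀ x, IsProbabilityMeasure (K x)) ∧
  (∀ A : Set Ω, MeasurableSet A → Measurable fun x => K x A) ∧
  (∀ A : Set Ω, MeasurableSet A → ∀ B : Set β, MeasurableSet B →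
    R (A ∩ X ⁻¹' B) = ∫⁻ x in B, K x A ∂(R.map X))

/-- The `c`-transform `Q_c φ(x) = inf_{ρ ∈ 𝒫_p} (c(x,ρ) + ∫ φ dρ)`. -/
def Qc {m : ℕ} (p : ℝ) (c : Euc m → Measure (Euc m) → ℝ) (φ : Euc m → ℝ) (x : Euc m) : ℝ :=
  ⨅ ρ : {ρ : Measure (Euc m) // memPp p ρ}, (c x ρ.1 + ∫ y, φ y ∂ρ.1)

/-- Membership in `B_{b,p}(ℝ^m)`. -/
def memBbp {m : ℕ} (p : ℝ) (φ : Euc m → ℝ) : Prop :=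
  Measurable φ ∧ ∃ a b : ℝ, ∀ y, a ≤ φ y ∧ φ y ≤ b * (1 + ‖y‖ ^ p)

/-- The dual functional `Ψ^φ(μ)`, where `g` plays the role of `Q_c φ` and `Px` of the
regular conditional distribution of `ℙ` given `X_0`. -/
def Psi {T : ℝ} (hT : 0 ≤ T) {m : ℕ} (ℓ : ℝ → ℝ)
    (Px : Euc m → Measure (PathSpace T m)) (g : Euc m → ℝ) (C : PathSpace T m → ℝ)
    (ν0 μ : Measure (Euc m)) : ℝ :=
  -∫ x, OCE ℓ (Px x) (fun ω => -(g (evalEnd hT ω)) - C ω) ∂μ + (Idiv ℓ μ ν0).toReal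

/-- Superadditivity of the divergence relative to `P` (with `X` playing the role of `X_0`). -/
def SuperadditiveDiv {Ω β : Type*} [MeasurableSpace Ω] [MeasurableSpace β] (ℓ : ℝ → ℝ)
    (P : Measure Ω) (X : Ω → β) (Px : β → Measure Ω) : Prop :=
  ∀ (Q : Measure Ω), IsProbabilityMeasure Q →
    ∀ Qx : β → Measure Ω, IsRCD Q X Qx →
      Idiv ℓ (Q.map X) (P.map X) + ∫⁻ x, Idiv ℓ (Qx x) (Px x) ∂(Q.map X) ≤ Idiv ℓ Q P

/-- Subadditivity of the divergence relative to `P`. -/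
def SubadditiveDiv {Ω β : Type*} [MeasurableSpace Ω] [MeasurableSpace β] (ℓ : ℝ → ℝ)
    (P : Measure Ω) (X : Ω → β) (Px : β → Measure Ω) : Prop :=
  ∀ (Q : Measure Ω), IsProbabilityMeasure Q →
    ∀ Qx : β → Measure Ω, IsRCD Q X Qx →
      Idiv ℓ Q P ≤ Idiv ℓ (Q.map X) (P.map X) + ∫⁻ x, Idiv ℓ (Qx x) (Px x) ∂(Q.map X)

/-- Extended-real integral of a real function: `∫ ξ⁺ - ∫ ξ⁻` in `EReal`. -/
def EInt' {α : Type*} [MeasurableSpace α] (Q : Measure α) (ξ : α → ℝ) : EReal :=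
  ((∫⁻ x, ENNReal.ofReal (ξ x) ∂Q : ℝ≥0∞) : EReal) -
    ((∫⁻ x, ENNReal.ofReal (-ξ x) ∂Q : ℝ≥0∞) : EReal)

/-- Time reversal on the interval `[0,T]`. -/
def revIcc (T : ℝ) : C(Set.Icc (0:ℝ) T, Set.Icc (0:ℝ) T) :=
  ⟨fun t => ⟨T - t.1, Set.mem_Icc.mpr
      ⟨by have := (Set.mem_Icc.mp t.2).2; linarith, by have := (Set.mem_Icc.mp t.2).1; linarith⟩⟩,
    Continuous.subtype_mk (continuous_const.sub continuous_subtype_val) _⟩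

/-- Time reversal map `𝒯 : Ω → Ω`, `𝒯(ω)(t) = ω(T - t)`. -/
def timeReverse {T : ℝ} {m : ℕ} (ω : PathSpace T m) : PathSpace T m :=
  ω.comp (revIcc T)


-- AUX START
namespace Stmt7Aux

instance (T : ℝ) (m : ℕ) : BorelSpace (PathSpace T m) := ⟨rfl⟩

set_option synthInstance.maxHeartbeats 1000000 in
instance (T : ℝ) (m : ℕ) : PolishSpace (PathSpace T m) := inferInstance

set_option synthInstance.maxHeartbeats 1000000 in
set_option maxHeartbeats 1000000 in
instance (T : ℝ) (m : ℕ) : StandardBorelSpace (PathSpace T m) := inferInstance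

set_option synthInstance.maxHeartbeats 1000000 in
set_option maxHeartbeats 1000000 in
instance (T : ℝ) (m : ℕ) : MeasurableSpace.CountablyGenerated (PathSpace T m) :=
  inferInstance

set_option synthInstance.maxHeartbeats 1000000 in
set_option maxHeartbeats 1000000 in
instance (T : ℝ) (m : ℕ) : MeasurableSpace.SeparatesPoints (Euc m × PathSpace T m) := by
  haveI : OpensMeasurableSpace (Euc m × PathSpace T m) := Prod.opensMeasurableSpace
  exact OpensMeasurableSpace.separatesPoints

set_option synthInstance.maxHeartbeats 1000000 in
set_option maxHeartbeats 1000000 in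
instance (T : ℝ) (m : ℕ) : MeasurableSpace.CountablySeparated (Euc m × PathSpace T m) :=
  inferInstance

set_option synthInstance.maxHeartbeats 1000000 in
instance (T : ℝ) (m : ℕ) :
    MeasurableSpace.CountableOrCountablyGenerated (Euc m) (PathSpace T m) := inferInstance

section Generic
variable {α γ : Type*} {mα : MeasurableSpace α} {mγ : MeasurableSpace γ}
  [MeasurableSpace.CountableOrCountablyGenerated α γ]

omit [MeasurableSpace.CountableOrCountablyGenerated α γ] in
lemma compProd_withDensity (μ : Measure α) [SFinite μ] (η : Kernel α γ) [IsSFiniteKernel η]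
    (f : α → γ → ℝ≥0∞) (hf : Measurable fun p : α × γ => f p.1 p.2)
    [IsSFiniteKernel (Kernel.withDensity η f)] :
    μ ⊗ₘ (Kernel.withDensity η f) = (μ ⊗ₘ η).withDensity (fun p => f p.1 p.2) := by
  ext s hs
  rw [Measure.compProd_apply hs, withDensity_apply _ hs, ← lintegral_indicator hs,
    Measure.lintegral_compProd (hf.indicator hs)]
  refine lintegral_congr fun a => ?_
  rw [Kernel.withDensity_apply _ hf, withDensity_apply _ (measurable_prodMk_left hs),
    ← lintegral_indicator (measurable_prodMk_left hs)]
  refine lintegral_congr fun x => ?_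
  by_cases hx : (a, x) ∈ s
  · rw [Set.indicator_of_mem hx, Set.indicator_of_mem (by exact hx)]
  · rw [Set.indicator_of_notMem hx, Set.indicator_of_notMem (by exact hx)]

lemma slice_eq (κ η : Kernel α γ) (a : α) :
    Prod.mk a ⁻¹' Kernel.mutuallySingularSet κ η = Kernel.mutuallySingularSetSlice κ η a := rfl

lemma compProd_singularPart_mutuallySingular (μ : Measure α) [SFinite μ]
    (κ η : Kernel α γ) [IsFiniteKernel κ] [IsFiniteKernel η] :
    (μ ⊗ₘ Kernel.singularPart κ η) ⟂ₘ (μ ⊗ₘ η) := by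
  refine ⟨(Kernel.mutuallySingularSet κ η)ᶜ,
    (Kernel.measurableSet_mutuallySingularSet κ η).compl, ?_, ?_⟩
  · rw [Measure.compProd_apply (Kernel.measurableSet_mutuallySingularSet κ η).compl]
    simp only [Set.preimage_compl, slice_eq,
      Kernel.singularPart_compl_mutuallySingularSetSlice, lintegral_zero]
  · rw [compl_compl, Measure.compProd_apply (Kernel.measurableSet_mutuallySingularSet κ η)]
    simp only [slice_eq, Kernel.measure_mutuallySingularSetSlice, lintegral_zero]

lemma decomposition (μ : Measure α) [SFinite μ]
    (κ η : Kernel α γ) [IsFiniteKernel κ] [IsFiniteKernel η] :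
    μ ⊗ₘ κ = μ ⊗ₘ Kernel.singularPart κ η +
      (μ ⊗ₘ η).withDensity (fun p => Kernel.rnDeriv κ η p.1 p.2) := by
  rw [← compProd_withDensity μ η _ (Kernel.measurable_rnDeriv κ η),
    ← Measure.compProd_add_right]
  congr 1
  rw [add_comm]
  exact (Kernel.rnDeriv_add_singularPart κ η).symm

lemma rnDeriv_compProd (μ : Measure α) [IsFiniteMeasure μ]
    (κ η : Kernel α γ) [IsFiniteKernel κ] [IsFiniteKernel η] :
    (fun p => Kernel.rnDeriv κ η p.1 p.2) =ᵐ[μ ⊗ₘ η] (μ ⊗ₘ κ).rnDeriv (μ ⊗ₘ η) :=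
  Measure.eq_rnDeriv (Kernel.measurable_rnDeriv κ η)
    (compProd_singularPart_mutuallySingular μ κ η) (decomposition μ κ η)

lemma ac_compProd_iff (μ : Measure α) [IsFiniteMeasure μ]
    (κ η : Kernel α γ) [IsFiniteKernel κ] [IsFiniteKernel η] :
    μ ⊗ₘ κ ≪ μ ⊗ₘ η ↔ ∀ᵐ a ∂μ, κ a ≪ η a := by
  constructor
  · intro h
    have hle : μ ⊗ₘ Kernel.singularPart κ η ≤ μ ⊗ₘ κ := by
      rw [decomposition μ κ η]; exact Measure.le_add_right le_rfl
    have hzero : μ ⊗ₘ Kernel.singularPart κ η = 0 :=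
      Measure.eq_zero_of_absolutelyContinuous_of_mutuallySingular
        ((Measure.absolutelyContinuous_of_le hle).trans h)
        (compProd_singularPart_mutuallySingular μ κ η)
    have huniv : ∫⁻ a, Kernel.singularPart κ η a Set.univ ∂μ = 0 := by
      have := congrArg (fun ν : Measure (α × γ) => ν Set.univ) hzero
      simpa [Measure.compProd_apply MeasurableSet.univ] using this
    have hae : ∀ᵐ a ∂μ, Kernel.singularPart κ η a Set.univ = 0 :=
      (lintegral_eq_zero_iff ((Kernel.singularPart κ η).measurable_coe
        MeasurableSet.univ)).mp huniv
    filter_upwards [hae] with a ha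
    rw [← Kernel.singularPart_eq_zero_iff_absolutelyContinuous]
    exact Measure.measure_univ_eq_zero.mp ha
  · exact Measure.AbsolutelyContinuous.compProd_right

end Generic

/-- Build a kernel from a family of measures with measurable evaluations. -/
def mkKernel {β Ω : Type*} [MeasurableSpace β] [MeasurableSpace Ω] (K : β → Measure Ω)
    (h : ∀ A : Set Ω, MeasurableSet A → Measurable fun x => K x A) : Kernel β Ω :=
  ⟨K, Measure.measurable_of_measurable_coe K h⟩

@[simp] lemma mkKernel_apply {β Ω : Type*} [MeasurableSpace β] [MeasurableSpace Ω]
    (K : β → Measure Ω) (h) (x : β) : mkKernel K h x = K x := rfl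

lemma map_eq_compProd {Ω β : Type*} [MeasurableSpace Ω] [MeasurableSpace β]
    (R : Measure Ω) [IsProbabilityMeasure R] (X : Ω → β) (hX : Measurable X)
    (K : Kernel β Ω) [IsMarkovKernel K]
    (h : ∀ A : Set Ω, MeasurableSet A → ∀ B : Set β, MeasurableSet B →
      R (A ∩ X ⁻¹' B) = ∫⁻ x in B, K x A ∂(R.map X)) :
    R.map (fun ω => (X ω, ω)) = (R.map X) ⊗ₘ K := by
  have hφ : Measurable fun ω => (X ω, ω) := hX.prodMk measurable_id
  have hmap : IsProbabilityMeasure (R.map X) := Measure.isProbabilityMeasure_map hX.aemeasurable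
  have h1 : IsProbabilityMeasure (R.map fun ω => (X ω, ω)) :=
    Measure.isProbabilityMeasure_map hφ.aemeasurable
  refine ext_of_generate_finite _ generateFrom_prod.symm isPiSystem_prod ?_ ?_
  · rintro s ⟨B, hB, A, hA, rfl⟩
    rw [Measure.map_apply hφ ((hB : MeasurableSet B).prod hA),
      Measure.compProd_apply_prod hB hA, ← h A hA B hB]
    congr 1
    ext ω
    simp [Set.mem_prod, and_comm]
  · simp

end Stmt7Aux
-- AUX END

open Stmt7Aux

set_option maxHeartbeats 1000000 in
/-- tensorization of the divergence over the initial condition. -/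
theorem stmt7 {m : ℕ} (hm : 1 ≤ m) {T : ℝ} (hT : 0 < T)
    (ℓ : ℝ → ℝ) (hL : AssumptionL ℓ)
    (Q P : Measure (PathSpace T m)) (hQ : IsProbabilityMeasure Q) (hP : IsProbabilityMeasure P)
    (μ0 : Measure (Euc m))
    (hQ0 : Q.map (evalStart hT.le) = μ0) (hP0 : P.map (evalStart hT.le) = μ0)
    (Qx Px : Euc m → Measure (PathSpace T m))
    (hQx : IsRCD Q (evalStart hT.le) Qx) (hPx : IsRCD P (evalStart hT.le) Px) :
    Idiv ℓ Q P = ∫⁻ x, Idiv ℓ (Qx x) (Px x) ∂μ0 := by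
  classical
  haveI := hQ; haveI := hP
  set X : PathSpace T m → Euc m := evalStart hT.le with hXdef
  have hXm : Measurable X := (continuous_eval_const _).measurable
  haveI hμ0 : IsProbabilityMeasure μ0 := hQ0 ▸ Measure.isProbabilityMeasure_map hXm.aemeasurable
  set κQ : Kernel (Euc m) (PathSpace T m) := mkKernel Qx hQx.2.1 with hκQ
  set κP : Kernel (Euc m) (PathSpace T m) := mkKernel Px hPx.2.1 with hκP
  haveI : IsMarkovKernel κQ := ⟨fun x => hQx.1 x⟩
  haveI : IsMarkovKernel κP := ⟨fun x => hPx.1 x⟩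
  set φ : PathSpace T m → Euc m × PathSpace T m := fun ω => (X ω, ω) with hφdef
  have hφm : Measurable φ := hXm.prodMk measurable_id
  have hφinj : Function.Injective φ := fun a b h => congrArg Prod.snd h
  have e : MeasurableEmbedding φ := hφm.measurableEmbedding hφinj
  have hQ' : Q.map φ = μ0 ⊗ₘ κQ := by
    rw [← hQ0]; exact map_eq_compProd Q X hXm κQ hQx.2.2
  have hP' : P.map φ = μ0 ⊗ₘ κP := by
    rw [← hP0]; exact map_eq_compProd P X hXm κP hPx.2.2
  -- measurable version of ℓ on [0, ∞)
  set ℓ₀ : ℝ → ℝ := (Set.Ioi (0:ℝ)).piecewise ℓ (fun _ => ℓ 0) with hℓ₀def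
  have hℓ₀m : Measurable ℓ₀ :=
    ContinuousOn.measurable_piecewise (hL.smooth.continuousOn) continuousOn_const
      measurableSet_Ioi
  have hℓ₀ : ∀ t : ℝ, 0 ≤ t → ℓ₀ t = ℓ t := by
    intro t ht
    rcases eq_or_lt_of_le ht with h | h
    · simp [hℓ₀def, Set.piecewise, ← h]
    · simp [hℓ₀def, Set.piecewise, Set.mem_Ioi, h]
  by_cases hac : Q ≪ P
  · have hac' : μ0 ⊗ₘ κQ ≪ μ0 ⊗ₘ κP := by
      rw [← hQ', ← hP']; exact hac.map hφm
    have haex : ∀ᵐ x ∂μ0, Qx x ≪ Px x := (ac_compProd_iff μ0 κQ κP).mp hac'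
    have hFm : Measurable fun p : Euc m × PathSpace T m =>
        ENNReal.ofReal (ℓ₀ (((μ0 ⊗ₘ κQ).rnDeriv (μ0 ⊗ₘ κP) p).toReal)) :=
      ENNReal.measurable_ofReal.comp (hℓ₀m.comp
        (Measure.measurable_rnDeriv _ _).ennreal_toReal)
    have hGm : Measurable fun p : Euc m × PathSpace T m =>
        ENNReal.ofReal (ℓ₀ ((Kernel.rnDeriv κQ κP p.1 p.2).toReal)) :=
      ENNReal.measurable_ofReal.comp (hℓ₀m.comp
        (Kernel.measurable_rnDeriv κQ κP).ennreal_toReal)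
    rw [Idiv, if_pos hac]
    calc ∫⁻ ω, ENNReal.ofReal (ℓ ((Q.rnDeriv P ω).toReal)) ∂P
        = ∫⁻ ω, ENNReal.ofReal
            (ℓ₀ (((μ0 ⊗ₘ κQ).rnDeriv (μ0 ⊗ₘ κP) (φ ω)).toReal)) ∂P := by
          refine lintegral_congr_ae ?_
          have h1 := e.rnDeriv_map Q P
          rw [hQ', hP'] at h1
          filter_upwards [h1] with ω hω
          rw [← hω, hℓ₀ _ ENNReal.toReal_nonneg]
      _ = ∫⁻ p, ENNReal.ofReal
            (ℓ₀ (((μ0 ⊗ₘ κQ).rnDeriv (μ0 ⊗ₘ κP) p).toReal)) ∂(P.map φ) :=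
          (lintegral_map hFm hφm).symm
      _ = ∫⁻ p, ENNReal.ofReal
            (ℓ₀ (((μ0 ⊗ₘ κQ).rnDeriv (μ0 ⊗ₘ κP) p).toReal)) ∂(μ0 ⊗ₘ κP) := by
          rw [hP']
      _ = ∫⁻ p, ENNReal.ofReal
            (ℓ₀ ((Kernel.rnDeriv κQ κP p.1 p.2).toReal)) ∂(μ0 ⊗ₘ κP) := by
          refine lintegral_congr_ae ?_
          filter_upwards [rnDeriv_compProd μ0 κQ κP] with p hp
          rw [← hp]
      _ = ∫⁻ x, ∫⁻ ω, ENNReal.ofReal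
            (ℓ₀ ((Kernel.rnDeriv κQ κP x ω).toReal)) ∂(κP x) ∂μ0 :=
          Measure.lintegral_compProd hGm
      _ = ∫⁻ x, Idiv ℓ (Qx x) (Px x) ∂μ0 := by
          refine lintegral_congr_ae ?_
          filter_upwards [haex] with x hx
          rw [Idiv, if_pos hx]
          refine lintegral_congr_ae ?_
          have h2 : Kernel.rnDeriv κQ κP x =ᵐ[κP x] (Qx x).rnDeriv (Px x) :=
            Kernel.rnDeriv_eq_rnDeriv_measure
          filter_upwards [h2] with ω hω
          rw [hω, hℓ₀ _ ENNReal.toReal_nonneg]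
  · rw [Idiv, if_neg hac]
    have hac' : ¬ (μ0 ⊗ₘ κQ ≪ μ0 ⊗ₘ κP) := by
      intro h
      apply hac
      refine Measure.AbsolutelyContinuous.mk fun A hA hA0 => ?_
      have hPA : (P.map φ) (φ '' A) = 0 := by
        rw [e.map_apply, hφinj.preimage_image]; exact hA0
      have hQA : (Q.map φ) (φ '' A) = 0 := by
        rw [hQ']; rw [hP'] at hPA; exact h hPA
      rwa [e.map_apply, hφinj.preimage_image] at hQA
    have hnae : ¬ ∀ᵐ x ∂μ0, Qx x ≪ Px x := fun h => hac' ((ac_compProd_iff μ0 κQ κP).mpr h)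
    have hne : μ0 {x | Qx x ≪ Px x}ᶜ ≠ 0 := by
      intro h0
      rw [Set.compl_setOf] at h0
      exact hnae (ae_iff.mpr h0)
    have hSm : MeasurableSet {x | Qx x ≪ Px x} :=
      Kernel.measurableSet_absolutelyContinuous κQ κP
    symm
    rw [eq_top_iff]
    calc (⊤ : ℝ≥0∞) = ⊤ * μ0 {x | Qx x ≪ Px x}ᶜ := by
          rw [ENNReal.top_mul hne]
      _ = ∫⁻ x in {x | Qx x ≪ Px x}ᶜ, ⊤ ∂μ0 := by rw [setLIntegral_const]
      _ = ∫⁻ x in {x | Qx x ≪ Px x}ᶜ, Idiv ℓ (Qx x) (Px x) ∂μ0 := by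
          refine setLIntegral_congr_fun hSm.compl (fun x hx => ?_)
          simp only [Idiv]
          exact (if_neg hx).symm
      _ ≤ ∫⁻ x, Idiv ℓ (Qx x) (Px x) ∂μ0 := setLIntegral_le_lintegral _ _


end
end

section
/- (The c-transform for the discrete cost.) Let c(x,ρ) := ρ({y ∈ ℝ^m : y ≠ x}), fix p ≥ 1, and let φ : ℝ^m → ℝ be Borel measurable with a ≤ φ(y) ≤ b(1+‖y‖^p) for some constants a, b. Then for every x ∈ ℝ^m: Q_cφ(x) = min{ φ(x), 1 + inf_{y∈ℝ^m, y≠x} φ(y) }, and for every constant k ∈ ℝ, Q_c(φ + k) = Q_cφ + k. -/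
open MeasureTheory ProbabilityTheory Filter Classical
open scoped ENNReal NNReal

noncomputable section

/-- Extended-real integral of a real function: `∫ ξ⁺ - ∫ ξ⁻` in `EReal`. -/
def EIntR {α : Type*} [MeasurableSpace α] (Q : Measure α) (ξ : α → ℝ) : EReal :=
  ((∫⁻ x, ENNReal.ofReal (ξ x) ∂Q : ℝ≥0∞) : EReal) -
    ((∫⁻ x, ENNReal.ofReal (-ξ x) ∂Q : ℝ≥0∞) : EReal)

lemma stmt14_integrable {m : ℕ} {p : ℝ} (hp : 1 ≤ p) {φ : Euc m → ℝ} (hφ : Measurable φ)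
    {a b : ℝ} (hbd : ∀ y, a ≤ φ y ∧ φ y ≤ b * (1 + ‖y‖ ^ p)) {ρ : Measure (Euc m)}
    (hρ : memPp p ρ) : Integrable φ ρ := by
  haveI := hρ.1
  have hmeas : Measurable fun y : Euc m => ‖y‖ ^ p := measurable_norm.pow_const p
  have hint : Integrable (fun y : Euc m => ‖y‖ ^ p) ρ := by
    refine ⟨hmeas.aestronglyMeasurable, ?_⟩
    unfold HasFiniteIntegral
    have : ∀ y : Euc m, ‖‖y‖ ^ p‖ₑ = (‖y‖₊ : ℝ≥0∞) ^ p := by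
      intro y
      rw [Real.enorm_eq_ofReal (Real.rpow_nonneg (norm_nonneg y) p),
        ← ENNReal.ofReal_rpow_of_nonneg (norm_nonneg y) (by linarith), ofReal_norm, enorm_eq_nnnorm]
    simp_rw [this]
    exact hρ.2
  have hg : Integrable (fun y : Euc m => |a| + |b| * (1 + ‖y‖ ^ p)) ρ := by
    exact (integrable_const _).add (((integrable_const (1:ℝ)).add hint).const_mul _)
  refine hg.mono' hφ.aestronglyMeasurable (ae_of_all _ fun y => ?_)
  have h1 : (0:ℝ) ≤ ‖y‖ ^ p := Real.rpow_nonneg (norm_nonneg y) p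
  have h2 := (hbd y).1
  have h3 := (hbd y).2
  have hb : b * (1 + ‖y‖ ^ p) ≤ |b| * (1 + ‖y‖ ^ p) :=
    mul_le_mul_of_nonneg_right (le_abs_self b) (by linarith)
  rw [Real.norm_eq_abs, abs_le]
  constructor
  · have := neg_abs_le a
    nlinarith [abs_nonneg b]
  · linarith [le_abs_self a, abs_nonneg a]

lemma stmt14_memPp_dirac {m : ℕ} {p : ℝ} (hp : 1 ≤ p) (z : Euc m) :
    memPp p (Measure.dirac z) := by
  refine ⟨inferInstance, ?_⟩
  rw [lintegral_dirac]
  exact ENNReal.rpow_lt_top_of_nonneg (by linarith) ENNReal.coe_ne_top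

lemma stmt14_ciInf_add {ι : Type*} [Nonempty ι] (f : ι → ℝ) (hb : BddBelow (Set.range f))
    (k : ℝ) : ⨅ i, (f i + k) = (⨅ i, f i) + k := by
  obtain ⟨L, hL⟩ := hb
  refine le_antisymm ?_ (le_ciInf fun i => add_le_add_left (ciInf_le ⟨L, hL⟩ i) k)
  rw [← sub_le_iff_le_add]
  refine le_ciInf fun i => ?_
  rw [sub_le_iff_le_add]
  exact ciInf_le ⟨L + k, by rintro r ⟨i, rfl⟩; exact add_le_add_left (hL ⟨i, rfl⟩) k⟩ i

/-- the c-transform for the discrete cost. -/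
theorem stmt14 {m : ℕ} (hm : 1 ≤ m) (p : ℝ) (hp : 1 ≤ p)
    (φ : Euc m → ℝ) (hφ : Measurable φ)
    (a b : ℝ) (hbd : ∀ y, a ≤ φ y ∧ φ y ≤ b * (1 + ‖y‖ ^ p)) :
    (∀ x : Euc m, Qc p (fun x' ρ => (ρ {y | y ≠ x'}).toReal) φ x
        = min (φ x) (1 + ⨅ y : {y : Euc m // y ≠ x}, φ y.1)) ∧
    (∀ k : ℝ, ∀ x : Euc m, Qc p (fun x' ρ => (ρ {y | y ≠ x'}).toReal) (fun y => φ y + k) x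
        = Qc p (fun x' ρ => (ρ {y | y ≠ x'}).toReal) φ x + k) := by
  have hney : ∀ x : Euc m, Nonempty {y : Euc m // y ≠ x} := by
    intro x
    refine ⟨⟨x + EuclideanSpace.single ⟨0, hm⟩ 1, fun h => ?_⟩⟩
    have h0 : EuclideanSpace.single (⟨0, hm⟩ : Fin m) (1:ℝ) = 0 := by
      have := congrArg (· - x) h
      simpa [add_sub_cancel_left] using this
    have := congrFun (congrArg (fun f : EuclideanSpace ℝ (Fin m) => (f : Fin m → ℝ)) h0) ⟨0, hm⟩
    simpa [EuclideanSpace.single_apply] using this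
  haveI : Nonempty {ρ : Measure (Euc m) // memPp p ρ} :=
    ⟨⟨Measure.dirac 0, stmt14_memPp_dirac hp 0⟩⟩
  -- integral of φ against a probability measure is ≥ a
  have hIlb : ∀ ρ : {ρ : Measure (Euc m) // memPp p ρ}, a ≤ ∫ y, φ y ∂ρ.1 := by
    intro ρ
    haveI := ρ.2.1
    have := integral_mono (integrable_const a) (stmt14_integrable hp hφ hbd ρ.2)
      (fun y => (hbd y).1)
    simpa using this
  have hbdd : ∀ x : Euc m, BddBelow (Set.range fun ρ : {ρ : Measure (Euc m) // memPp p ρ} =>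
      ((ρ.1 {y | y ≠ x}).toReal + ∫ y, φ y ∂ρ.1)) := by
    intro x
    refine ⟨a, ?_⟩
    rintro r ⟨ρ, rfl⟩
    have := hIlb ρ
    have h0 : (0:ℝ) ≤ (ρ.1 {y | y ≠ x}).toReal := ENNReal.toReal_nonneg
    dsimp only
    linarith
  have hsx : ∀ x : Euc m, MeasurableSet {y : Euc m | y ≠ x} := by
    intro x
    have : {y : Euc m | y ≠ x} = {x}ᶜ := by ext y; simp [eq_comm]
    rw [this]; exact (measurableSet_singleton x).compl
  have hdiracx : ∀ x : Euc m, (Measure.dirac x {y : Euc m | y ≠ x}).toReal = 0 := by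
    intro x
    rw [Measure.dirac_apply' x (hsx x)]
    simp [Set.indicator_of_notMem]
  have hdiracy : ∀ x : Euc m, ∀ y : Euc m, y ≠ x →
      (Measure.dirac y {y : Euc m | y ≠ x}).toReal = 1 := by
    intro x y hy
    rw [Measure.dirac_apply' y (hsx x)]
    simp [Set.indicator_of_mem, hy]
  constructor
  · intro x
    haveI := hney x
    set I : ℝ := ⨅ y : {y : Euc m // y ≠ x}, φ y.1 with hI
    refine le_antisymm (le_min ?_ ?_) ?_
    · have h := ciInf_le (hbdd x) ⟨Measure.dirac x, stmt14_memPp_dirac hp x⟩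
      simp only [Qc]
      calc (⨅ ρ : {ρ : Measure (Euc m) // memPp p ρ},
            ((ρ.1 {y | y ≠ x}).toReal + ∫ y, φ y ∂ρ.1))
          ≤ (Measure.dirac x {y | y ≠ x}).toReal + ∫ y, φ y ∂(Measure.dirac x) := h
        _ = φ x := by rw [hdiracx x, integral_dirac]; ring
    · rw [← sub_le_iff_le_add']
      refine le_ciInf fun y => ?_
      rw [sub_le_iff_le_add']
      have h := ciInf_le (hbdd x) ⟨Measure.dirac y.1, stmt14_memPp_dirac hp y.1⟩
      simp only [Qc]
      calc (⨅ ρ : {ρ : Measure (Euc m) // memPp p ρ},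
            ((ρ.1 {y | y ≠ x}).toReal + ∫ y, φ y ∂ρ.1))
          ≤ (Measure.dirac y.1 {y | y ≠ x}).toReal + ∫ z, φ z ∂(Measure.dirac y.1) := h
        _ = 1 + φ y.1 := by rw [hdiracy x y.1 y.2, integral_dirac]
    · refine le_ciInf ?_
      rintro ⟨ρ, hρ⟩
      haveI := hρ.1
      have hint : Integrable φ ρ := stmt14_integrable hp hφ hbd hρ
      set s : Set (Euc m) := {y | y ≠ x} with hs_def
      have hs := hsx x
      have hscompl : sᶜ = {x} := by ext y; simp [hs_def]
      set t : ℝ := (ρ s).toReal with ht_def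
      have ht0 : 0 ≤ t := ENNReal.toReal_nonneg
      have htx : (ρ {x}).toReal = 1 - t := by
        have hadd : ρ s + ρ sᶜ = 1 := by
          rw [measure_add_measure_compl hs, measure_univ]
        have := congrArg ENNReal.toReal hadd
        rw [ENNReal.toReal_add (measure_ne_top ρ s) (measure_ne_top ρ sᶜ)] at this
        rw [← hscompl]
        simp only [ENNReal.toReal_one] at this
        linarith
      have ht1 : t ≤ 1 := by
        have : (0:ℝ) ≤ (ρ {x}).toReal := ENNReal.toReal_nonneg
        linarith [htx]
      have hsplit : ∫ y, φ y ∂ρ = ∫ y in s, φ y ∂ρ + ∫ y in sᶜ, φ y ∂ρ :=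
        (integral_add_compl hs hint).symm
      have h1 : ∫ y in sᶜ, φ y ∂ρ = φ x * (1 - t) := by
        rw [hscompl]
        have hc : ∫ y in ({x} : Set (Euc m)), φ y ∂ρ
            = ∫ _y in ({x} : Set (Euc m)), φ x ∂ρ :=
          setIntegral_congr_fun (measurableSet_singleton x)
            (fun y hy => by simp only [Set.mem_singleton_iff] at hy; rw [hy])
        rw [hc, setIntegral_const, measureReal_def, htx, smul_eq_mul, mul_comm]
      have hIbd : BddBelow (Set.range fun y : {y : Euc m // y ≠ x} => φ y.1) :=
        ⟨a, by rintro r ⟨y, rfl⟩; exact (hbd y.1).1⟩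
      have h2 : I * t ≤ ∫ y in s, φ y ∂ρ := by
        have hmono : ∫ y in s, (fun _ => I) y ∂ρ ≤ ∫ y in s, φ y ∂ρ := by
          refine setIntegral_mono_on (integrableOn_const (measure_ne_top ρ s))
            hint.integrableOn hs ?_
          intro y hy
          exact ciInf_le hIbd ⟨y, hy⟩
        rwa [setIntegral_const, measureReal_def, smul_eq_mul, mul_comm] at hmono
      simp only
      rw [hsplit, h1]
      have hm1 : min (φ x) (1 + I) ≤ φ x := min_le_left _ _
      have hm2 : min (φ x) (1 + I) ≤ 1 + I := min_le_right _ _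
      nlinarith
  · intro k x
    have hterm : ∀ ρ : {ρ : Measure (Euc m) // memPp p ρ},
        (ρ.1 {y | y ≠ x}).toReal + ∫ y, (φ y + k) ∂ρ.1
          = ((ρ.1 {y | y ≠ x}).toReal + ∫ y, φ y ∂ρ.1) + k := by
      rintro ⟨ρ, hρ⟩
      haveI := hρ.1
      rw [integral_add (stmt14_integrable hp hφ hbd hρ) (integrable_const k),
        integral_const]
      simp [add_assoc]
    simp only [Qc]
    rw [iInf_congr hterm]
    exact stmt14_ciInf_add _ (hbdd x) k

end
end
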